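/- arXiv:1611.04062 — 2 statements merged into one kernel-verified Lean document; each statement's English description precedes it below -/
import Mathlib

section
/- Let I = [a,b] ⊂ ℝ and J = {(x,y) : x ∈ I, y ∈ [a,x]}. Suppose φ : I → ℝⁿ is continuous and K : J × ℝⁿ → ℝⁿ is continuous and Lipschitz in its last variable with constant L (with respect to the sum norm): |K(x,y,z) − K(x,y,z')| ≤ L|z − z'| for all (x,y) ∈ J and z, z' ∈ ℝⁿ. Then the Volterra integral equation y(t) = φ(t) + ∫_a^t K(t,s,y(s)) ds has a unique continuous solution y : I → ℝⁿ. -/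
open Set intervalIntegral

theorem volterraAux (n : ℕ) (a b : ℝ) (hab : a ≤ b)
    (φ : ℝ → Fin n → ℝ) (hφ : Continuous φ)
    (K : ℝ → ℝ → (Fin n → ℝ) → Fin n → ℝ)
    (hK : Continuous fun p : (ℝ × ℝ) × (Fin n → ℝ) => K p.1.1 p.1.2 p.2)
    (L0 : ℝ) (hL0 : 0 ≤ L0)
    (hLip : ∀ x y : ℝ, ∀ z z' : Fin n → ℝ, ‖K x y z - K x y z'‖ ≤ L0 * ‖z - z'‖) :
    ∃ y : ℝ → Fin n → ℝ, Continuous y ∧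
      (∀ t ∈ Icc a b, y t = φ t + ∫ s in a..t, K t s (y s)) ∧
      ∀ y' : ℝ → Fin n → ℝ, ContinuousOn y' (Icc a b) →
        (∀ t ∈ Icc a b, y' t = φ t + ∫ s in a..t, K t s (y' s)) →
        EqOn y y' (Icc a b) := by
  have hne : Nonempty (Icc a b) := ⟨⟨a, le_refl a, hab⟩⟩
  -- extension of a continuous map on Icc to ℝ
  set ext : C(Icc a b, Fin n → ℝ) → ℝ → Fin n → ℝ :=
    fun f s => f (projIcc a b hab s) with hext
  have hextc : ∀ f, Continuous (ext f) := fun f => f.continuous.comp continuous_projIcc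
  have hextmem : ∀ (f : C(Icc a b, Fin n → ℝ)) (s : ℝ) (hs : s ∈ Icc a b),
      ext f s = f ⟨s, hs⟩ := by
    intro f s hs
    simp [hext, projIcc_of_mem hab hs]
  -- continuity of the integrand
  have hint : ∀ (f : C(Icc a b, Fin n → ℝ)),
      Continuous fun p : ℝ × ℝ => K p.1 p.2 (ext f p.2) := by
    intro f
    have h1 : Continuous fun p : ℝ × ℝ => ((p, ext f p.2) : (ℝ × ℝ) × (Fin n → ℝ)) :=
      continuous_id.prodMk ((hextc f).comp continuous_snd)
    exact hK.comp h1
  have hint' : ∀ (f : C(Icc a b, Fin n → ℝ)) (t : ℝ),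
      Continuous fun s : ℝ => K t s (ext f s) :=
    fun f t => (hint f).comp (continuous_const.prodMk continuous_id)
  have hG : ∀ (f : C(Icc a b, Fin n → ℝ)),
      Continuous fun t : ℝ => φ t + ∫ s in a..t, K t s (ext f s) := by
    intro f
    refine hφ.add ?_
    exact continuous_parametric_intervalIntegral_of_continuous (f := fun t s => K t s (ext f s))
      (hint f) continuous_id
  set T : C(Icc a b, Fin n → ℝ) → C(Icc a b, Fin n → ℝ) := fun f =>
    ⟨fun t => φ t + ∫ s in a..(t : ℝ), K t s (ext f s),
      ((hG f).comp continuous_subtype_val : _)⟩ with hT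
  -- the key iterated estimate
  have key : ∀ (k : ℕ) (f g : C(Icc a b, Fin n → ℝ)) (t : Icc a b),
      ‖(T^[k] f) t - (T^[k] g) t‖ ≤ L0 ^ k * ((t : ℝ) - a) ^ k / (Nat.factorial k) * dist f g := by
    intro k
    induction k with
    | zero =>
      intro f g t
      simpa [dist_eq_norm] using ContinuousMap.dist_apply_le_dist (f := f) (g := g) t
    | succ k ih =>
      intro f g t
      rw [Function.iterate_succ_apply', Function.iterate_succ_apply']
      set F := T^[k] f with hF
      set G := T^[k] g with hGG
      have hTF : (T F) t = φ t + ∫ s in a..(t : ℝ), K t s (ext F s) := rfl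
      have hTG : (T G) t = φ t + ∫ s in a..(t : ℝ), K t s (ext G s) := rfl
      have hiF : IntervalIntegrable (fun s => K t s (ext F s)) MeasureTheory.volume a t :=
        (hint' F t).intervalIntegrable _ _
      have hiG : IntervalIntegrable (fun s => K t s (ext G s)) MeasureTheory.volume a t :=
        (hint' G t).intervalIntegrable _ _
      have hsub : (T F) t - (T G) t
          = ∫ s in a..(t : ℝ), (K t s (ext F s) - K t s (ext G s)) := by
        rw [hTF, hTG, intervalIntegral.integral_sub hiF hiG]
        abel
      have hta : a ≤ (t : ℝ) := t.2.1
      have htb : (t : ℝ) ≤ b := t.2.2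
      set d := dist f g with hd
      have hdnn : 0 ≤ d := dist_nonneg
      set c : ℝ := L0 ^ (k + 1) * d / (Nat.factorial k) with hc
      have hcnn : 0 ≤ c := by positivity
      have hbound : ∀ s ∈ Ioc a (t : ℝ),
          ‖K t s (ext F s) - K t s (ext G s)‖ ≤ c * (s - a) ^ k := by
        intro s hs
        have hs' : s ∈ Icc a b := ⟨hs.1.le, hs.2.trans htb⟩
        have h1 : ‖K t s (ext F s) - K t s (ext G s)‖ ≤ L0 * ‖ext F s - ext G s‖ :=
          hLip _ _ _ _
        have h2 : ‖ext F s - ext G s‖ ≤ L0 ^ k * (s - a) ^ k / (Nat.factorial k) * d := by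
          rw [hextmem F s hs', hextmem G s hs']
          exact ih f g ⟨s, hs'⟩
        calc ‖K t s (ext F s) - K t s (ext G s)‖
            ≤ L0 * (L0 ^ k * (s - a) ^ k / (Nat.factorial k) * d) :=
              h1.trans (by nlinarith [h2, hL0])
          _ = c * (s - a) ^ k := by rw [hc]; ring
      have hnorm : ‖(T F) t - (T G) t‖ ≤ |∫ s in a..(t : ℝ), c * (s - a) ^ k| := by
        rw [hsub]
        apply intervalIntegral.norm_integral_le_abs_of_norm_le
        · rw [MeasureTheory.ae_restrict_iff' measurableSet_uIoc]
          filter_upwards with s hs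
          exact hbound s (by rwa [uIoc_of_le hta] at hs)
        · exact Continuous.intervalIntegrable (by fun_prop) _ _
      have hcomp : (∫ s in a..(t : ℝ), c * (s - a) ^ k)
          = c * (((t : ℝ) - a) ^ (k + 1) / (k + 1)) := by
        rw [intervalIntegral.integral_const_mul]
        congr 1
        have h3 := intervalIntegral.integral_comp_sub_right (a := a) (b := (t : ℝ))
          (fun u => u ^ k) a
        rw [h3, sub_self, integral_pow]
        simp
      have hval : c * (((t : ℝ) - a) ^ (k + 1) / (k + 1))
          = L0 ^ (k + 1) * ((t : ℝ) - a) ^ (k + 1) / (Nat.factorial (k + 1)) * d := by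
        rw [hc, Nat.factorial_succ]
        have h1 : (Nat.factorial k : ℝ) ≠ 0 := by positivity
        have h2 : ((k : ℝ) + 1) ≠ 0 := by positivity
        push_cast
        field_simp
      calc ‖(T F) t - (T G) t‖ ≤ |∫ s in a..(t : ℝ), c * (s - a) ^ k| := hnorm
        _ = c * (((t : ℝ) - a) ^ (k + 1) / (k + 1)) := by
            rw [hcomp, abs_of_nonneg (mul_nonneg hcnn (div_nonneg (pow_nonneg (sub_nonneg.2 hta) _) (by positivity)))]
        _ = _ := hval
  -- contraction of an iterate
  have hba : (0:ℝ) ≤ b - a := sub_nonneg.2 hab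
  have hdistk : ∀ (k : ℕ) (f g : C(Icc a b, Fin n → ℝ)),
      dist (T^[k] f) (T^[k] g)
        ≤ (L0 * (b - a)) ^ k / (Nat.factorial k) * dist f g := by
    intro k f g
    have hC : (0:ℝ) ≤ (L0 * (b - a)) ^ k / (Nat.factorial k) * dist f g := by
      have := pow_nonneg (mul_nonneg hL0 hba) k
      positivity
    rw [ContinuousMap.dist_le hC]
    intro t
    rw [dist_eq_norm]
    refine (key k f g t).trans ?_
    rw [mul_pow]
    have hpow : ((t:ℝ) - a) ^ k ≤ (b - a) ^ k :=
      pow_le_pow_left₀ (sub_nonneg.2 t.2.1) (sub_le_sub_right t.2.2 a) k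
    have hfac : (0:ℝ) < (Nat.factorial k : ℝ) := by positivity
    have hL0k : (0:ℝ) ≤ L0 ^ k := pow_nonneg hL0 k
    have hdnn : (0:ℝ) ≤ dist f g := dist_nonneg
    have h1 : L0 ^ k * ((t:ℝ) - a) ^ k ≤ L0 ^ k * (b - a) ^ k :=
      mul_le_mul_of_nonneg_left hpow hL0k
    have h2 : L0 ^ k * ((t:ℝ) - a) ^ k / (Nat.factorial k)
        ≤ L0 ^ k * (b - a) ^ k / (Nat.factorial k) :=
      div_le_div_of_nonneg_right h1 hfac.le |>.trans_eq rfl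
    exact mul_le_mul_of_nonneg_right h2 hdnn
  obtain ⟨k, hk⟩ : ∃ k : ℕ, (L0 * (b - a)) ^ k / (Nat.factorial k) < 1 := by
    have h := FloorSemiring.tendsto_pow_div_factorial_atTop (K := ℝ) (L0 * (b - a))
    exact (h.eventually_lt_const one_pos).exists
  have hCk0 : (0:ℝ) ≤ (L0 * (b - a)) ^ k / (Nat.factorial k) := by
    have := pow_nonneg (mul_nonneg hL0 hba) k
    positivity
  have hlipk : LipschitzWith (Real.toNNReal ((L0 * (b - a)) ^ k / (Nat.factorial k))) (T^[k]) :=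
    LipschitzWith.of_dist_le_mul fun f g => by
      rw [Real.coe_toNNReal _ hCk0]; exact hdistk k f g
  have hcontr : ContractingWith
      (Real.toNNReal ((L0 * (b - a)) ^ k / (Nat.factorial k))) (T^[k]) := by
    refine ⟨?_, hlipk⟩
    rw [← NNReal.coe_lt_coe, Real.coe_toNNReal _ hCk0]
    simpa using hk
  set u : C(Icc a b, Fin n → ℝ) := hcontr.fixedPoint (T^[k]) with hu
  have hufix : T u = u := hcontr.isFixedPt_fixedPoint_iterate
  refine ⟨ext u, hextc u, ?_, ?_⟩
  · intro t ht
    have h1 : ext u t = u ⟨t, ht⟩ := hextmem u t ht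
    rw [h1]
    conv_lhs => rw [← hufix]
    rfl
  · intro y' hy'c hy'eq
    set f' : C(Icc a b, Fin n → ℝ) := ⟨(Icc a b).restrict y', hy'c.restrict⟩ with hf'
    have hTf' : T f' = f' := by
      ext t
      have heq : EqOn (fun s => K t s (ext f' s)) (fun s => K t s (y' s)) (uIcc a (t:ℝ)) := by
        intro s hs
        rw [uIcc_of_le t.2.1] at hs
        have hs' : s ∈ Icc a b := ⟨hs.1, hs.2.trans t.2.2⟩
        simp only [hextmem f' s hs']
        rfl
      have : (T f') t = φ t + ∫ s in a..(t:ℝ), K t s (y' s) := by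
        show φ (t:ℝ) + _ = _
        rw [intervalIntegral.integral_congr heq]
      rw [this, ← hy'eq t t.2]
      rfl
    have hf'fix : Function.IsFixedPt (T^[k]) f' := Function.IsFixedPt.iterate hTf' k
    have : f' = u := hcontr.fixedPoint_unique hf'fix
    intro t ht
    have h1 : ext u t = u ⟨t, ht⟩ := hextmem u t ht
    rw [h1, ← this]
    rfl

/-- Existence and uniqueness of continuous solutions of the vector-valued
Volterra integral equation of the second kind. -/
theorem stmt_0 (n : ℕ) (a b : ℝ) (hab : a ≤ b)
    (φ : ℝ → Fin n → ℝ) (K : ℝ → ℝ → (Fin n → ℝ) → Fin n → ℝ) (L : ℝ)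
    (hφ : ContinuousOn φ (Icc a b))
    (hK : ContinuousOn (fun p : (ℝ × ℝ) × (Fin n → ℝ) => K p.1.1 p.1.2 p.2)
      (({p : ℝ × ℝ | p.1 ∈ Icc a b ∧ p.2 ∈ Icc a p.1}) ×ˢ (univ : Set (Fin n → ℝ))))
    (hLip : ∀ x ∈ Icc a b, ∀ y ∈ Icc a x, ∀ z z' : Fin n → ℝ,
      (∑ i, |K x y z i - K x y z' i|) ≤ L * ∑ i, |z i - z' i|) :
    ∃ y : ℝ → Fin n → ℝ,
      (ContinuousOn y (Icc a b) ∧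
        ∀ t ∈ Icc a b, y t = φ t + ∫ s in a..t, K t s (y s)) ∧
      ∀ y' : ℝ → Fin n → ℝ,
        (ContinuousOn y' (Icc a b) ∧
          ∀ t ∈ Icc a b, y' t = φ t + ∫ s in a..t, K t s (y' s)) →
        EqOn y y' (Icc a b) := by
  set px : ℝ → ℝ := fun x => max a (min x b) with hpx
  set py : ℝ → ℝ → ℝ := fun x y => max a (min y (px x)) with hpy
  have hpxmem : ∀ x, px x ∈ Icc a b := fun x =>
    ⟨le_max_left _ _, max_le hab (min_le_right _ _)⟩
  have hpymem : ∀ x y, py x y ∈ Icc a (px x) := fun x y =>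
    ⟨le_max_left _ _, max_le (hpxmem x).1 (min_le_right _ _)⟩
  have hpxeq : ∀ x ∈ Icc a b, px x = x := fun x hx => by
    simp only [hpx]; rw [min_eq_left hx.2, max_eq_right hx.1]
  have hpyeq : ∀ x ∈ Icc a b, ∀ s ∈ Icc a x, py x s = s := by
    intro x hx s hs
    simp only [hpy]
    rw [hpxeq x hx, min_eq_left hs.2, max_eq_right hs.1]
  have hpxc : Continuous px := continuous_const.max (continuous_id.min continuous_const)
  have hφtc : Continuous fun t => φ (px t) := hφ.comp_continuous hpxc hpxmem
  have hKtc : Continuous fun p : (ℝ × ℝ) × (Fin n → ℝ) =>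
      K (px p.1.1) (py p.1.1 p.1.2) p.2 := by
    have hmap : Continuous fun p : (ℝ × ℝ) × (Fin n → ℝ) =>
        (((px p.1.1, py p.1.1 p.1.2), p.2) : (ℝ × ℝ) × (Fin n → ℝ)) := by
      have h1 : Continuous fun p : (ℝ × ℝ) × (Fin n → ℝ) => px p.1.1 :=
        hpxc.comp (continuous_fst.comp continuous_fst)
      have h2 : Continuous fun p : (ℝ × ℝ) × (Fin n → ℝ) => py p.1.1 p.1.2 :=
        continuous_const.max ((continuous_snd.comp continuous_fst).min h1)
      exact (h1.prodMk h2).prodMk continuous_snd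
    exact hK.comp_continuous hmap fun p => ⟨⟨hpxmem _, hpymem _ _⟩, mem_univ _⟩
  have hL0 : (0:ℝ) ≤ (n : ℝ) * max L 0 := by positivity
  have hlip' : ∀ x y : ℝ, ∀ z z' : Fin n → ℝ,
      ‖(fun x y z => K (px x) (py x y) z) x y z - (fun x y z => K (px x) (py x y) z) x y z'‖
        ≤ (n : ℝ) * max L 0 * ‖z - z'‖ := by
    intro x y z z'
    have hsum0 : (0:ℝ) ≤ ∑ j, |z j - z' j| := Finset.sum_nonneg fun j _ => abs_nonneg _
    have h0 : (0:ℝ) ≤ (n : ℝ) * max L 0 * ‖z - z'‖ :=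
      mul_nonneg hL0 (norm_nonneg _)
    rw [pi_norm_le_iff_of_nonneg h0]
    intro i
    have h1 : ‖(K (px x) (py x y) z - K (px x) (py x y) z') i‖
        ≤ ∑ j, |K (px x) (py x y) z j - K (px x) (py x y) z' j| := by
      rw [Real.norm_eq_abs]
      exact Finset.single_le_sum (f := fun j => |K (px x) (py x y) z j - K (px x) (py x y) z' j|)
        (fun j _ => abs_nonneg _) (Finset.mem_univ i)
    have h2 := hLip (px x) (hpxmem x) (py x y) (hpymem x y) z z'
    have h3 : (∑ j, |z j - z' j|) ≤ (n : ℝ) * ‖z - z'‖ := by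
      have hj : ∀ j, |z j - z' j| ≤ ‖z - z'‖ := fun j => by
        simpa [Real.norm_eq_abs] using norm_le_pi_norm (z - z') j
      calc (∑ j, |z j - z' j|) ≤ ∑ _j : Fin n, ‖z - z'‖ :=
            Finset.sum_le_sum fun j _ => hj j
        _ = (n : ℝ) * ‖z - z'‖ := by
            simp [Finset.sum_const, Finset.card_univ]
    have h4 : L * (∑ j, |z j - z' j|) ≤ max L 0 * (∑ j, |z j - z' j|) :=
      mul_le_mul_of_nonneg_right (le_max_left _ _) hsum0
    have h5 : max L 0 * (∑ j, |z j - z' j|) ≤ max L 0 * ((n : ℝ) * ‖z - z'‖) :=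
      mul_le_mul_of_nonneg_left h3 (le_max_right L 0)
    calc ‖(K (px x) (py x y) z - K (px x) (py x y) z') i‖
        ≤ ∑ j, |K (px x) (py x y) z j - K (px x) (py x y) z' j| := h1
      _ ≤ L * ∑ j, |z j - z' j| := h2
      _ ≤ max L 0 * ((n : ℝ) * ‖z - z'‖) := h4.trans h5
      _ = (n : ℝ) * max L 0 * ‖z - z'‖ := by ring
  obtain ⟨y, hyc, hyeq, hyuniq⟩ := volterraAux n a b hab (fun t => φ (px t)) hφtc
    (fun x y z => K (px x) (py x y) z) hKtc ((n : ℝ) * max L 0) hL0 hlip'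
  refine ⟨y, ⟨hyc.continuousOn, ?_⟩, ?_⟩
  · intro t ht
    have hcong : EqOn (fun s => K (px t) (py t s) (y s)) (fun s => K t s (y s))
        (uIcc a t) := by
      intro s hs
      rw [uIcc_of_le ht.1] at hs
      simp only
      rw [hpxeq t ht, hpyeq t ht s hs]
    rw [hyeq t ht, intervalIntegral.integral_congr hcong, hpxeq t ht]
  · rintro y' ⟨hy'c, hy'eq⟩
    apply hyuniq y' hy'c
    intro t ht
    have hcong : EqOn (fun s => K (px t) (py t s) (y' s)) (fun s => K t s (y' s))
        (uIcc a t) := by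
      intro s hs
      rw [uIcc_of_le ht.1] at hs
      simp only
      rw [hpxeq t ht, hpyeq t ht s hs]
    rw [intervalIntegral.integral_congr hcong, hpxeq t ht]
    exact hy'eq t ht
end

section
/- Let y : [0,T] → ℝ be continuous with y(t) = 1 − ∫₀ᵗ sin(y(s)) ds for all t ∈ [0,T], and let (ỹ, v₁, v₂) be the unique continuous solution of the system ỹ(t) = 1 − ∫₀ᵗ v₁(s) ds, v₁(t) = sin 1 − ∫₀ᵗ v₂(s)v₁(s) ds, v₂(t) = cos 1 + ∫₀ᵗ v₁(s)² ds on [0,T]. Then ỹ = y, v₁ = sin ∘ y, and v₂ = cos ∘ y on [0,T]. -/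
open Real Set

open MeasureTheory intervalIntegral in
lemma key17 {T : ℝ} (f : ℝ → ℝ) (hf : ContinuousOn f (Icc 0 T)) {t : ℝ}
    (ht : t ∈ Ico 0 T) :
    HasDerivWithinAt (fun u => ∫ s in (0:ℝ)..u, f s) (f t) (Ici t) t := by
  have hmem : Icc (0:ℝ) T ∈ nhdsWithin t (Ioi t) := Icc_mem_nhdsGT_of_mem ht
  have hint : IntervalIntegrable f volume 0 t := by
    apply ContinuousOn.intervalIntegrable
    apply hf.mono
    rw [uIcc_of_le ht.1]
    exact Icc_subset_Icc le_rfl ht.2.le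
  have hmeas : StronglyMeasurableAtFilter f (nhdsWithin t (Ioi t)) volume :=
    ⟨Icc 0 T, hmem, (hf.aestronglyMeasurable measurableSet_Icc)⟩
  have hcw : ContinuousWithinAt f (Ioi t) t :=
    ((hf.continuousWithinAt (Ico_subset_Icc_self ht)).mono_of_mem_nhdsWithin hmem)
  exact integral_hasDerivWithinAt_right hint hmeas hcw

/-- If `y` solves `y t = 1 - ∫₀ᵗ sin (y s) ds` on `[0,T]` and `(ỹ, v₁, v₂)` is a
continuous solution of the augmented polynomial Volterra system, then `ỹ = y`,
`v₁ = sin ∘ y`, `v₂ = cos ∘ y` on `[0,T]`. -/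
theorem stmt_17 (T : ℝ) (hT : 0 ≤ T) (y : ℝ → ℝ)
    (hy : ContinuousOn y (Icc 0 T))
    (heq : ∀ t ∈ Icc 0 T, y t = 1 - ∫ s in (0:ℝ)..t, sin (y s))
    (yt v₁ v₂ : ℝ → ℝ)
    (hyt : ContinuousOn yt (Icc 0 T)) (hv₁ : ContinuousOn v₁ (Icc 0 T))
    (hv₂ : ContinuousOn v₂ (Icc 0 T))
    (heq1 : ∀ t ∈ Icc 0 T, yt t = 1 - ∫ s in (0:ℝ)..t, v₁ s)
    (heq2 : ∀ t ∈ Icc 0 T, v₁ t = sin 1 - ∫ s in (0:ℝ)..t, v₂ s * v₁ s)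
    (heq3 : ∀ t ∈ Icc 0 T, v₂ t = cos 1 + ∫ s in (0:ℝ)..t, (v₁ s) ^ 2) :
    EqOn yt y (Icc 0 T) ∧
    EqOn v₁ (fun u => sin (y u)) (Icc 0 T) ∧
    EqOn v₂ (fun u => cos (y u)) (Icc 0 T) := by
  -- continuity of the auxiliary functions
  have hsy : ContinuousOn (fun s => sin (y s)) (Icc 0 T) := continuous_sin.comp_continuousOn hy
  have hcy : ContinuousOn (fun s => cos (y s)) (Icc 0 T) := continuous_cos.comp_continuousOn hy
  have hprod : ContinuousOn (fun s => v₂ s * v₁ s) (Icc 0 T) := hv₂.mul hv₁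
  have hsq : ContinuousOn (fun s => (v₁ s) ^ 2) (Icc 0 T) := hv₁.pow 2
  -- bound R
  obtain ⟨C₁, hC₁⟩ := (isCompact_Icc (a := (0:ℝ)) (b := T)).exists_bound_of_continuousOn hv₁
  obtain ⟨C₂, hC₂⟩ := (isCompact_Icc (a := (0:ℝ)) (b := T)).exists_bound_of_continuousOn hv₂
  set R : ℝ := max 1 (max C₁ C₂) with hR
  have hR1 : (1:ℝ) ≤ R := le_max_left _ _
  have hR0 : (0:ℝ) < R := lt_of_lt_of_le one_pos hR1
  have hRv₁ : ∀ t ∈ Icc 0 T, |v₁ t| ≤ R := fun t ht =>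
    (hC₁ t ht).trans ((le_max_left _ _).trans (le_max_right _ _))
  have hRv₂ : ∀ t ∈ Icc 0 T, |v₂ t| ≤ R := fun t ht =>
    (hC₂ t ht).trans ((le_max_right _ _).trans (le_max_right _ _))
  -- the vector field
  set F : ℝ → ℝ × ℝ → ℝ × ℝ := fun _ p => (-(p.2 * p.1), p.1 ^ 2) with hF
  set K : NNReal := ⟨2 * R, by positivity⟩ with hK
  have hvlip : ∀ t : ℝ, LipschitzOnWith K (F t) (Metric.closedBall (0 : ℝ × ℝ) R) := by
    intro t
    rw [lipschitzOnWith_iff_dist_le_mul]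
    intro p hp q hq
    simp only [Metric.mem_closedBall, dist_zero_right, Prod.norm_def, max_le_iff,
      Real.norm_eq_abs] at hp hq
    have hd1 : |p.1 - q.1| ≤ dist p q := by
      rw [Prod.dist_eq, Real.dist_eq]; exact le_max_left _ _
    have hd1' : |q.1 - p.1| ≤ dist p q := by rwa [abs_sub_comm]
    have hd2' : |q.2 - p.2| ≤ dist p q := by
      rw [abs_sub_comm, Prod.dist_eq, Real.dist_eq]; exact le_max_right _ _
    have hdq : (0:ℝ) ≤ dist p q := dist_nonneg
    have hKv : (K : ℝ) = 2 * R := rfl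
    rw [hKv, Prod.dist_eq]
    apply max_le
    · simp only [hF, Real.dist_eq]
      have he : (-(p.2 * p.1)) - (-(q.2 * q.1)) = p.2 * (q.1 - p.1) + q.1 * (q.2 - p.2) := by ring
      rw [he]
      calc |p.2 * (q.1 - p.1) + q.1 * (q.2 - p.2)|
          ≤ |p.2 * (q.1 - p.1)| + |q.1 * (q.2 - p.2)| := abs_add_le _ _
        _ = |p.2| * |q.1 - p.1| + |q.1| * |q.2 - p.2| := by rw [abs_mul, abs_mul]
        _ ≤ R * dist p q + R * dist p q :=
            add_le_add (mul_le_mul hp.2 hd1' (abs_nonneg _) hR0.le)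
              (mul_le_mul hq.1 hd2' (abs_nonneg _) hR0.le)
        _ = 2 * R * dist p q := by ring
    · simp only [hF, Real.dist_eq]
      have he : p.1 ^ 2 - q.1 ^ 2 = (p.1 + q.1) * (p.1 - q.1) := by ring
      rw [he, abs_mul]
      calc |p.1 + q.1| * |p.1 - q.1|
          ≤ (|p.1| + |q.1|) * dist p q :=
            mul_le_mul (abs_add_le _ _) hd1 (abs_nonneg _) (by positivity)
        _ ≤ (R + R) * dist p q := by
            apply mul_le_mul_of_nonneg_right (add_le_add hp.1 hq.1) hdq
        _ = 2 * R * dist p q := by ring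
  -- the two trajectories
  set g : ℝ → ℝ × ℝ := fun t => (v₁ t, v₂ t) with hg
  set h : ℝ → ℝ × ℝ := fun t => (sin (y t), cos (y t)) with hh
  have hgc : ContinuousOn g (Icc 0 T) := hv₁.prodMk hv₂
  have hhc : ContinuousOn h (Icc 0 T) := hsy.prodMk hcy
  -- y has derivative -sin (y t)
  have hy' : ∀ t ∈ Ico 0 T, HasDerivWithinAt y (-sin (y t)) (Ici t) t := by
    intro t ht
    have h0 : HasDerivWithinAt (fun u => 1 - ∫ s in (0:ℝ)..u, sin (y s)) (-sin (y t)) (Ici t) t :=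
      ((key17 _ hsy ht).const_sub 1)
    apply h0.congr_of_eventuallyEq
    · filter_upwards [Icc_mem_nhdsGE_of_mem ht] with u hu
      exact (heq u hu).symm ▸ rfl
    · exact (heq t (Ico_subset_Icc_self ht))
  -- derivative of h
  have hh' : ∀ t ∈ Ico 0 T, HasDerivWithinAt h (F t (h t)) (Ici t) t := by
    intro t ht
    have h1 : HasDerivWithinAt (fun u => sin (y u)) (cos (y t) * (-sin (y t))) (Ici t) t :=
      (Real.hasDerivAt_sin (y t)).comp_hasDerivWithinAt t (hy' t ht)
    have h2 : HasDerivWithinAt (fun u => cos (y u)) ((-sin (y t)) * (-sin (y t))) (Ici t) t :=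
      (Real.hasDerivAt_cos (y t)).comp_hasDerivWithinAt t (hy' t ht)
    have := h1.prodMk h2
    convert this using 2 <;> simp [hF, hh] <;> ring
  -- derivative of g
  have hg' : ∀ t ∈ Ico 0 T, HasDerivWithinAt g (F t (g t)) (Ici t) t := by
    intro t ht
    have h1 : HasDerivWithinAt v₁ (-(v₂ t * v₁ t)) (Ici t) t := by
      have h0 : HasDerivWithinAt (fun u => sin 1 - ∫ s in (0:ℝ)..u, v₂ s * v₁ s)
          (-(v₂ t * v₁ t)) (Ici t) t := ((key17 _ hprod ht).const_sub (sin 1))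
      apply h0.congr_of_eventuallyEq
      · filter_upwards [Icc_mem_nhdsGE_of_mem ht] with u hu
        exact (heq2 u hu).symm ▸ rfl
      · exact (heq2 t (Ico_subset_Icc_self ht))
    have h2 : HasDerivWithinAt v₂ ((v₁ t) ^ 2) (Ici t) t := by
      have h0 : HasDerivWithinAt (fun u => cos 1 + ∫ s in (0:ℝ)..u, (v₁ s) ^ 2)
          ((v₁ t) ^ 2) (Ici t) t := ((key17 _ hsq ht).const_add (cos 1))
      apply h0.congr_of_eventuallyEq
      · filter_upwards [Icc_mem_nhdsGE_of_mem ht] with u hu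
        exact (heq3 u hu).symm ▸ rfl
      · exact (heq3 t (Ico_subset_Icc_self ht))
    exact h1.prodMk h2
  -- membership in the ball
  have hgs : ∀ t ∈ Ico 0 T, g t ∈ Metric.closedBall (0 : ℝ × ℝ) R := by
    intro t ht
    have ht' := Ico_subset_Icc_self ht
    simp only [Metric.mem_closedBall, dist_zero_right, Prod.norm_def, Real.norm_eq_abs]
    exact max_le (hRv₁ t ht') (hRv₂ t ht')
  have hhs : ∀ t ∈ Ico 0 T, h t ∈ Metric.closedBall (0 : ℝ × ℝ) R := by
    intro t _
    simp only [Metric.mem_closedBall, dist_zero_right, Prod.norm_def, Real.norm_eq_abs]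
    exact max_le ((abs_sin_le_one _).trans hR1) ((abs_cos_le_one _).trans hR1)
  -- initial conditions
  have hy0 : y 0 = 1 := by simpa using heq 0 (left_mem_Icc.2 hT)
  have h00 : g 0 = h 0 := by
    have h1 : v₁ 0 = sin 1 := by simpa using heq2 0 (left_mem_Icc.2 hT)
    have h2 : v₂ 0 = cos 1 := by simpa using heq3 0 (left_mem_Icc.2 hT)
    simp [hg, hh, h1, h2, hy0]
  -- uniqueness
  have huniq : EqOn g h (Icc 0 T) :=
    ODE_solution_unique_of_mem_Icc_right (fun t _ => hvlip t) hgc hg' hgs hhc hh' hhs h00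
  have e1 : EqOn v₁ (fun u => sin (y u)) (Icc 0 T) := fun t ht =>
    congrArg Prod.fst (huniq ht)
  have e2 : EqOn v₂ (fun u => cos (y u)) (Icc 0 T) := fun t ht =>
    congrArg Prod.snd (huniq ht)
  refine ⟨?_, e1, e2⟩
  intro t ht
  have hint : (∫ s in (0:ℝ)..t, v₁ s) = ∫ s in (0:ℝ)..t, sin (y s) := by
    apply intervalIntegral.integral_congr
    intro s hs
    apply e1
    rw [uIcc_of_le ht.1] at hs
    exact ⟨hs.1, hs.2.trans ht.2⟩
  rw [heq1 t ht, hint, ← heq t ht]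
end
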